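/- Let Gⁱ be a spray on U and let P : U × (ℝⁿ∖{0}) → ℝ be smooth, positively 1-homogeneous in y, and horizontally constant with respect to G: δP/δxʲ = 0 for all j. Consider the projectively changed spray G̃ⁱ = Gⁱ + P yⁱ (which is again a spray). Then at every point of U × (ℝⁿ∖{0}): (i) Ñⁱⱼ = Nⁱⱼ + (∂P/∂yʲ) yⁱ + P δⁱⱼ (coordinate form of h̃ = h + [PC, J]); (ii) R̃ⁱⱼₖ = Rⁱⱼₖ + P((∂P/∂yʲ) δⁱₖ − (∂P/∂yᵏ) δⁱⱼ) (coordinate form of R̃ = R + P d_J P ∧ J); (iii) R̃ⁱⱼ = Rⁱⱼ + P² δⁱⱼ − P (∂P/∂yʲ) yⁱ (coordinate form of Φ̃ = Φ + P²J − P d_JP ⊗ C), where tilded objects are the connection, curvature tensor and Jacobi endomorphism of G̃. -/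

import Mathlib

namespace PM

abbrev E (n : ℕ) := (Fin n → ℝ) × (Fin n → ℝ)

noncomputable def pdx {n : ℕ} (i : Fin n) (f : E n → ℝ) (z : E n) : ℝ :=
  fderiv ℝ f z (Pi.single i 1, 0)

noncomputable def pdy {n : ℕ} (i : Fin n) (f : E n → ℝ) (z : E n) : ℝ :=
  fderiv ℝ f z (0, Pi.single i 1)

def Dom {n : ℕ} (U : Set (Fin n → ℝ)) : Set (E n) := U ×ˢ {y : Fin n → ℝ | y ≠ 0}

/-- A spray in local coordinates: an `n`-tuple of smooth functions on
`U × (ℝⁿ∖{0})`, positively `2`-homogeneous in `y`. -/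
def IsSpray {n : ℕ} (U : Set (Fin n → ℝ)) (G : Fin n → E n → ℝ) : Prop :=
  (∀ i, ContDiffOn ℝ (⊤ : ℕ∞) (G i) (Dom U)) ∧
  ∀ i, ∀ x ∈ U, ∀ y : Fin n → ℝ, y ≠ 0 → ∀ L : ℝ, 0 < L →
    G i (x, L • y) = L ^ 2 * G i (x, y)

/-- Nonlinear connection `Nⁱⱼ = ∂Gⁱ/∂yʲ`. -/
noncomputable def Nc {n : ℕ} (G : Fin n → E n → ℝ) (i j : Fin n) (z : E n) : ℝ :=
  pdy j (G i) z

/-- Horizontal derivative `δf/δxʲ = ∂f/∂xʲ − Nᵏⱼ ∂f/∂yᵏ`. -/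
noncomputable def delx {n : ℕ} (G : Fin n → E n → ℝ) (j : Fin n) (f : E n → ℝ) (z : E n) : ℝ :=
  pdx j f z - ∑ k, Nc G k j z * pdy k f z

/-- Spray derivative `S(f) = yᵏ ∂f/∂xᵏ − 2Gᵏ ∂f/∂yᵏ`. -/
noncomputable def Sder {n : ℕ} (G : Fin n → E n → ℝ) (f : E n → ℝ) (z : E n) : ℝ :=
  (∑ k, z.2 k * pdx k f z) - 2 * ∑ k, G k z * pdy k f z

/-- Curvature tensor `Rⁱⱼₖ = δNⁱⱼ/δxᵏ − δNⁱₖ/δxʲ`. -/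
noncomputable def Rcurv {n : ℕ} (G : Fin n → E n → ℝ) (i j k : Fin n) (z : E n) : ℝ :=
  delx G k (Nc G i j) z - delx G j (Nc G i k) z

/-- Jacobi endomorphism `Rⁱⱼ = 2 δGⁱ/δxʲ − S(Nⁱⱼ) + Nⁱₖ Nᵏⱼ`. -/
noncomputable def RJac {n : ℕ} (G : Fin n → E n → ℝ) (i j : Fin n) (z : E n) : ℝ :=
  2 * delx G j (G i) z - Sder G (Nc G i j) z + ∑ k, Nc G i k z * Nc G k j z

noncomputable def sq {n : ℕ} (F : E n → ℝ) : E n → ℝ := fun w => F w ^ 2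

/-- The `2n×2n` matrix of `dθ` for a semi-basic 1-form `θ`. -/
noncomputable def dthetaMat {n : ℕ} (θ : Fin n → E n → ℝ) (z : E n) :
    Matrix (Fin n ⊕ Fin n) (Fin n ⊕ Fin n) ℝ :=
  Matrix.fromBlocks
    (Matrix.of fun i j => pdx i (θ j) z - pdx j (θ i) z)
    (Matrix.of fun i j => -(pdy j (θ i) z))
    (Matrix.of fun i j => pdy i (θ j) z)
    0

/-- Finsler function in local coordinates. -/
def IsFinsler {n : ℕ} (U : Set (Fin n → ℝ)) (F : E n → ℝ) : Prop :=
  ContinuousOn F (U ×ˢ (Set.univ : Set (Fin n → ℝ))) ∧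
  ContDiffOn ℝ (⊤ : ℕ∞) F (Dom U) ∧
  (∀ z ∈ Dom U, 0 < F z) ∧
  (∀ x ∈ U, F (x, 0) = 0) ∧
  (∀ x ∈ U, ∀ y : Fin n → ℝ, ∀ L : ℝ, 0 < L → F (x, L • y) = L * F (x, y)) ∧
  (∀ z ∈ Dom U,
    (Matrix.of (fun i j : Fin n => (1 / 2 : ℝ) * pdy i (pdy j (sq F)) z)).rank = n)

/-- Geodesic coefficients of a Finsler function:
`yᵏ ∂²F²/∂xᵏ∂yⁱ − 2G_Fᵏ ∂²F²/∂yᵏ∂yⁱ = ∂F²/∂xⁱ`. -/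
def IsGeodesicCoeffs {n : ℕ} (U : Set (Fin n → ℝ)) (F : E n → ℝ)
    (GF : Fin n → E n → ℝ) : Prop :=
  (∀ i, ContDiffOn ℝ (⊤ : ℕ∞) (GF i) (Dom U)) ∧
  ∀ z ∈ Dom U, ∀ i : Fin n,
    (∑ k, z.2 k * pdx k (pdy i (sq F)) z)
      - 2 * ∑ k, GF k z * pdy k (pdy i (sq F)) z = pdx i (sq F) z

/-- Positively 1-homogeneous in `y`. -/
def PosHomog1 {n : ℕ} (U : Set (Fin n → ℝ)) (P : E n → ℝ) : Prop :=
  ∀ x ∈ U, ∀ y : Fin n → ℝ, y ≠ 0 → ∀ L : ℝ, 0 < L → P (x, L • y) = L * P (x, y)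

/-- A spray is projectively metrizable if `Gⁱ = G_Fⁱ + P yⁱ` for a Finsler
function `F` with geodesic coefficients `G_Fⁱ` and a smooth positively
1-homogeneous `P`. -/
def ProjectivelyMetrizable {n : ℕ} (U : Set (Fin n → ℝ)) (G : Fin n → E n → ℝ) : Prop :=
  ∃ (F : E n → ℝ) (GF : Fin n → E n → ℝ) (P : E n → ℝ),
    IsFinsler U F ∧ IsGeodesicCoeffs U F GF ∧
    ContDiffOn ℝ (⊤ : ℕ∞) P (Dom U) ∧ PosHomog1 U P ∧
    ∀ z ∈ Dom U, ∀ i, G i z = GF i z + P z * z.2 i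


section Aux

variable {n : ℕ} {Ω : Set (E n)} {f g : E n → ℝ} {z v w : E n}

/-- general directional partial derivative -/
noncomputable def pd (v : E n) (f : E n → ℝ) (z : E n) : ℝ := fderiv ℝ f z v

lemma pdx_eq (i : Fin n) (f : E n → ℝ) : pdx i f = pd (Pi.single i 1, 0) f := rfl
lemma pdy_eq (i : Fin n) (f : E n → ℝ) : pdy i f = pd (0, Pi.single i 1) f := rfl

lemma diffAt (hΩ : IsOpen Ω) (hf : ContDiffOn ℝ (⊤ : ℕ∞) f Ω) (hz : z ∈ Ω) :
    DifferentiableAt ℝ f z :=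
  (hf.contDiffAt (hΩ.mem_nhds hz)).differentiableAt (by simp)

lemma sm_pd (hΩ : IsOpen Ω) (hf : ContDiffOn ℝ (⊤ : ℕ∞) f Ω) (v : E n) :
    ContDiffOn ℝ (⊤ : ℕ∞) (pd v f) Ω :=
  (hf.fderiv_of_isOpen hΩ (by simp)).clm_apply contDiffOn_const

lemma sm_pdx (hΩ : IsOpen Ω) (hf : ContDiffOn ℝ (⊤ : ℕ∞) f Ω) (i : Fin n) :
    ContDiffOn ℝ (⊤ : ℕ∞) (pdx i f) Ω := by rw [pdx_eq]; exact sm_pd hΩ hf _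

lemma sm_pdy (hΩ : IsOpen Ω) (hf : ContDiffOn ℝ (⊤ : ℕ∞) f Ω) (i : Fin n) :
    ContDiffOn ℝ (⊤ : ℕ∞) (pdy i f) Ω := by rw [pdy_eq]; exact sm_pd hΩ hf _

lemma sm_coordy (i : Fin n) : ContDiffOn ℝ (⊤ : ℕ∞) (fun w : E n => w.2 i) Ω :=
  (((ContinuousLinearMap.proj i).comp
    (ContinuousLinearMap.snd ℝ (Fin n → ℝ) (Fin n → ℝ))).contDiff).contDiffOn

lemma pd_congr (hΩ : IsOpen Ω) (hz : z ∈ Ω) (h : ∀ w ∈ Ω, f w = g w) (v : E n) :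
    pd v f z = pd v g z := by
  have h' : f =ᶠ[nhds z] g := Filter.eventuallyEq_of_mem (hΩ.mem_nhds hz) h
  unfold pd; rw [h'.fderiv_eq]

lemma pd_add (hf : DifferentiableAt ℝ f z) (hg : DifferentiableAt ℝ g z) (v : E n) :
    pd v (fun w => f w + g w) z = pd v f z + pd v g z := by
  unfold pd; rw [fderiv_fun_add hf hg]; rfl

lemma pd_sub (hf : DifferentiableAt ℝ f z) (hg : DifferentiableAt ℝ g z) (v : E n) :
    pd v (fun w => f w - g w) z = pd v f z - pd v g z := by
  unfold pd; rw [fderiv_fun_sub hf hg]; rfl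

lemma pd_mul (hf : DifferentiableAt ℝ f z) (hg : DifferentiableAt ℝ g z) (v : E n) :
    pd v (fun w => f w * g w) z = f z * pd v g z + g z * pd v f z := by
  unfold pd; rw [fderiv_fun_mul hf hg]; rfl

lemma pd_const (c : ℝ) (v : E n) : pd v (fun _ => c) z = 0 := by
  unfold pd; rw [fderiv_fun_const]; rfl

lemma pd_const_mul (hf : DifferentiableAt ℝ f z) (c : ℝ) (v : E n) :
    pd v (fun w => c * f w) z = c * pd v f z := by
  rw [pd_mul (differentiableAt_const c) hf, pd_const]; ring

lemma pd_sum {ι : Type*} (s : Finset ι) (F : ι → E n → ℝ)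
    (h : ∀ i ∈ s, DifferentiableAt ℝ (F i) z) (v : E n) :
    pd v (fun w => ∑ i ∈ s, F i w) z = ∑ i ∈ s, pd v (F i) z := by
  unfold pd; rw [fderiv_fun_sum h]; simp

lemma pd_snd (i : Fin n) (v : E n) : pd v (fun w : E n => w.2 i) z = v.2 i := by
  have h : HasFDerivAt (fun w : E n => w.2 i)
      ((ContinuousLinearMap.proj i).comp
        (ContinuousLinearMap.snd ℝ (Fin n → ℝ) (Fin n → ℝ))) z :=
    ((ContinuousLinearMap.proj i).comp
      (ContinuousLinearMap.snd ℝ (Fin n → ℝ) (Fin n → ℝ))).hasFDerivAt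
  unfold pd; rw [h.fderiv]; rfl

lemma pd_pd (hΩ : IsOpen Ω) (hf : ContDiffOn ℝ (⊤ : ℕ∞) f Ω) (hz : z ∈ Ω) (v w : E n) :
    pd v (pd w f) z = fderiv ℝ (fderiv ℝ f) z v w := by
  have hd : DifferentiableAt ℝ (fderiv ℝ f) z :=
    ((hf.fderiv_of_isOpen hΩ (m := 1) (WithTop.coe_le_coe.mpr le_top)).contDiffAt (hΩ.mem_nhds hz)).differentiableAt (by simp : (1 : WithTop ℕ∞) ≠ 0)
  unfold pd
  rw [fderiv_clm_apply hd (differentiableAt_const w)]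
  simp

lemma pd_comm (hΩ : IsOpen Ω) (hf : ContDiffOn ℝ (⊤ : ℕ∞) f Ω) (hz : z ∈ Ω) (v w : E n) :
    pd v (pd w f) z = pd w (pd v f) z := by
  rw [pd_pd hΩ hf hz, pd_pd hΩ hf hz]
  exact (hf.contDiffAt (hΩ.mem_nhds hz)).isSymmSndFDerivAt (by rw [minSmoothness_of_isRCLikeNormedField]; exact WithTop.coe_le_coe.mpr le_top) v w

lemma clm_y (L : E n →L[ℝ] ℝ) (y : Fin n → ℝ) :
    L (0, y) = ∑ k, y k * L (0, Pi.single k 1) := by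
  have h : ((0 : Fin n → ℝ), y)
      = ∑ k, y k • (((0 : Fin n → ℝ), (Pi.single k 1 : Fin n → ℝ)) : E n) := by
    rw [Prod.ext_iff]
    constructor
    · rw [Prod.fst_sum]
      simp
    · rw [Prod.snd_sum]
      funext j
      rw [Finset.sum_apply]
      simp [Pi.single_apply, mul_ite, Finset.sum_ite_eq]
  rw [h, map_sum]
  refine Finset.sum_congr rfl fun k _ => ?_
  rw [map_smul, smul_eq_mul]

lemma euler {m : ℕ} {x y : Fin n → ℝ} (hf : DifferentiableAt ℝ f (x, y))
    (hhom : ∀ L : ℝ, 0 < L → f (x, L • y) = L ^ m * f (x, y)) :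
    ∑ k, y k * pdy k f (x, y) = m * f (x, y) := by
  have hφ : HasDerivAt (fun L : ℝ => ((x, L • y) : E n)) ((0 : Fin n → ℝ), y) 1 := by
    have h1 : HasDerivAt (fun _ : ℝ => x) (0 : Fin n → ℝ) 1 := hasDerivAt_const _ _
    have h2 : HasDerivAt (fun L : ℝ => L • y) ((1:ℝ) • y) 1 := (hasDerivAt_id 1).smul_const y
    simpa using h1.prodMk h2
  have h1 : HasDerivAt (fun L : ℝ => f (x, L • y)) (fderiv ℝ f (x, y) (0, y)) 1 := by
    have hf' : HasFDerivAt f (fderiv ℝ f (x, y)) ((x, (1:ℝ) • y) : E n) := by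
      simpa using hf.hasFDerivAt
    exact hf'.comp_hasDerivAt 1 hφ
  have h2 : HasDerivAt (fun L : ℝ => f (x, L • y)) ((m : ℝ) * f (x, y)) 1 := by
    have h3 : HasDerivAt (fun L : ℝ => L ^ m * f (x, y))
        (((m : ℝ) * 1 ^ (m - 1)) * f (x, y)) 1 := (hasDerivAt_pow m 1).mul_const _
    have h4 : (fun L : ℝ => L ^ m * f (x, y)) =ᶠ[nhds 1] fun L : ℝ => f (x, L • y) := by
      filter_upwards [lt_mem_nhds (show (0:ℝ) < 1 by norm_num)] with L hL
      rw [hhom L hL]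
    simpa using h4.hasDerivAt_iff.mp h3
  have := h1.unique h2
  calc ∑ k, y k * pdy k f (x, y) = fderiv ℝ f (x, y) (0, y) := (clm_y _ y).symm
    _ = m * f (x, y) := this

lemma pdy_add (hf : DifferentiableAt ℝ f z) (hg : DifferentiableAt ℝ g z) (j : Fin n) :
    pdy j (fun w => f w + g w) z = pdy j f z + pdy j g z := pd_add hf hg _

lemma pdx_add (hf : DifferentiableAt ℝ f z) (hg : DifferentiableAt ℝ g z) (j : Fin n) :
    pdx j (fun w => f w + g w) z = pdx j f z + pdx j g z := pd_add hf hg _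

lemma pdy_sub (hf : DifferentiableAt ℝ f z) (hg : DifferentiableAt ℝ g z) (j : Fin n) :
    pdy j (fun w => f w - g w) z = pdy j f z - pdy j g z := pd_sub hf hg _

lemma pdy_mul (hf : DifferentiableAt ℝ f z) (hg : DifferentiableAt ℝ g z) (j : Fin n) :
    pdy j (fun w => f w * g w) z = f z * pdy j g z + g z * pdy j f z := pd_mul hf hg _

lemma pdx_mul (hf : DifferentiableAt ℝ f z) (hg : DifferentiableAt ℝ g z) (j : Fin n) :
    pdx j (fun w => f w * g w) z = f z * pdx j g z + g z * pdx j f z := pd_mul hf hg _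

lemma pdy_const (c : ℝ) (j : Fin n) : pdy j (fun _ : E n => c) z = 0 := pd_const c _

lemma pdx_const (c : ℝ) (j : Fin n) : pdx j (fun _ : E n => c) z = 0 := pd_const c _

lemma pdy_const_mul (hf : DifferentiableAt ℝ f z) (c : ℝ) (j : Fin n) :
    pdy j (fun w => c * f w) z = c * pdy j f z := pd_const_mul hf c _

lemma pdy_sum {ι : Type*} (s : Finset ι) (F : ι → E n → ℝ)
    (h : ∀ i ∈ s, DifferentiableAt ℝ (F i) z) (j : Fin n) :
    pdy j (fun w => ∑ i ∈ s, F i w) z = ∑ i ∈ s, pdy j (F i) z := pd_sum s F h _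

lemma pdy_snd (i j : Fin n) : pdy j (fun w : E n => w.2 i) z = if i = j then 1 else 0 := by
  rw [pdy_eq, pd_snd]; simp [Pi.single_apply]

lemma pdx_snd (i j : Fin n) : pdx j (fun w : E n => w.2 i) z = 0 := by
  rw [pdx_eq, pd_snd]; rfl

lemma pdy_congr (hΩ : IsOpen Ω) (hz : z ∈ Ω) (h : ∀ w ∈ Ω, f w = g w) (j : Fin n) :
    pdy j f z = pdy j g z := pd_congr hΩ hz h _

lemma pdx_congr (hΩ : IsOpen Ω) (hz : z ∈ Ω) (h : ∀ w ∈ Ω, f w = g w) (j : Fin n) :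
    pdx j f z = pdx j g z := pd_congr hΩ hz h _

lemma pdy_pdy_comm (hΩ : IsOpen Ω) (hf : ContDiffOn ℝ (⊤ : ℕ∞) f Ω) (hz : z ∈ Ω) (j k : Fin n) :
    pdy j (pdy k f) z = pdy k (pdy j f) z := by
  rw [pdy_eq k f, pdy_eq j f, pdy_eq, pdy_eq]
  exact pd_comm hΩ hf hz _ _

lemma pdy_pdx_comm (hΩ : IsOpen Ω) (hf : ContDiffOn ℝ (⊤ : ℕ∞) f Ω) (hz : z ∈ Ω) (j k : Fin n) :
    pdy j (pdx k f) z = pdx k (pdy j f) z := by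
  rw [pdx_eq k f, pdy_eq j f, pdy_eq, pdx_eq]
  exact pd_comm hΩ hf hz _ _

lemma euler_step (hΩ : IsOpen Ω) (hf : ContDiffOn ℝ (⊤ : ℕ∞) f Ω) {m : ℝ}
    (he : ∀ w ∈ Ω, ∑ k, w.2 k * pdy k f w = m * f w) (hz : z ∈ Ω) (j : Fin n) :
    ∑ k, z.2 k * pdy k (pdy j f) z = (m - 1) * pdy j f z := by
  have hv : ∀ k : Fin n, DifferentiableAt ℝ (fun w : E n => w.2 k * pdy k f w) z := fun k =>
    (diffAt hΩ (sm_coordy k) hz).mul (diffAt hΩ (sm_pdy hΩ hf k) hz)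
  have h0 : pdy j (fun w => ∑ k, w.2 k * pdy k f w) z = pdy j (fun w => m * f w) z :=
    pdy_congr hΩ hz he j
  rw [pdy_const_mul (diffAt hΩ hf hz) m,
    pdy_sum Finset.univ _ (fun k _ => hv k)] at h0
  have h1 : ∀ k : Fin n, pdy j (fun w : E n => w.2 k * pdy k f w) z
      = z.2 k * pdy k (pdy j f) z + pdy k f z * (if k = j then 1 else 0) := by
    intro k
    rw [pdy_mul (diffAt hΩ (sm_coordy k) hz) (diffAt hΩ (sm_pdy hΩ hf k) hz), pdy_snd,
      pdy_pdy_comm hΩ hf hz]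
  rw [Finset.sum_congr rfl fun k _ => h1 k, Finset.sum_add_distrib] at h0
  simp only [mul_ite, mul_one, mul_zero, Finset.sum_ite_eq', Finset.mem_univ, if_true] at h0
  linarith

end Aux

section Main

variable {n : ℕ} {U : Set (Fin n → ℝ)} {G : Fin n → E n → ℝ} {P : E n → ℝ} {z : E n}

lemma isOpen_dom (hU : IsOpen U) : IsOpen (Dom U) := hU.prod isOpen_ne

lemma Nc_def (i j : Fin n) : Nc G i j = pdy j (G i) := rfl

lemma sm_N (hU : IsOpen U) (hG : IsSpray U G) (i j : Fin n) :
    ContDiffOn ℝ (⊤ : ℕ∞) (Nc G i j) (Dom U) := by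
  rw [Nc_def]; exact sm_pdy (isOpen_dom hU) (hG.1 i) j

lemma euler_G (hU : IsOpen U) (hG : IsSpray U G) (hz : z ∈ Dom U) (i : Fin n) :
    ∑ k, z.2 k * pdy k (G i) z = 2 * G i z := by
  obtain ⟨x, y⟩ := z
  have h := euler (f := G i) (m := 2)
    (diffAt (isOpen_dom hU) (hG.1 i) hz)
    (fun L hL => hG.2 i x hz.1 y hz.2 L hL)
  push_cast at h
  exact h

lemma euler_P (hU : IsOpen U) (hP : ContDiffOn ℝ (⊤ : ℕ∞) P (Dom U)) (hPh : PosHomog1 U P)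
    (hz : z ∈ Dom U) : ∑ k, z.2 k * pdy k P z = P z := by
  obtain ⟨x, y⟩ := z
  have h := euler (f := P) (m := 1)
    (diffAt (isOpen_dom hU) hP hz)
    (fun L hL => by rw [pow_one]; exact hPh x hz.1 y hz.2 L hL)
  push_cast at h
  simpa using h

lemma euler_N (hU : IsOpen U) (hG : IsSpray U G) (hz : z ∈ Dom U) (i j : Fin n) :
    ∑ k, z.2 k * pdy k (Nc G i j) z = Nc G i j z := by
  rw [Nc_def]
  have h := euler_step (isOpen_dom hU) (hG.1 i) (m := 2)
    (fun w hw => euler_G hU hG hw i) hz j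
  rw [h]; norm_num

lemma euler_Py (hU : IsOpen U) (hG : IsSpray U G) (hP : ContDiffOn ℝ (⊤ : ℕ∞) P (Dom U))
    (hPh : PosHomog1 U P) (hz : z ∈ Dom U) (j : Fin n) :
    ∑ k, z.2 k * pdy k (pdy j P) z = 0 := by
  have h := euler_step (isOpen_dom hU) hP (m := 1)
    (fun w hw => by rw [euler_P hU hP hPh hw]; ring) hz j
  rw [h]; ring

lemma hc_eq (hPhc : ∀ z ∈ Dom U, ∀ j, delx G j P z = 0) (hz : z ∈ Dom U) (j : Fin n) :
    pdx j P z = ∑ k, Nc G k j z * pdy k P z := by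
  have h := hPhc z hz j
  unfold delx at h
  linarith

lemma hQ (hU : IsOpen U) (hG : IsSpray U G) (hP : ContDiffOn ℝ (⊤ : ℕ∞) P (Dom U))
    (hPhc : ∀ z ∈ Dom U, ∀ j, delx G j P z = 0) (hz : z ∈ Dom U) (b c : Fin n) :
    delx G c (pdy b P) z = ∑ m, pdy b (Nc G m c) z * pdy m P z := by
  have hΩ := isOpen_dom hU
  have h0 : pdy b (fun w => pdx c P w - ∑ m, Nc G m c w * pdy m P w) z = 0 := by
    rw [pdy_congr (f := fun w => pdx c P w - ∑ m, Nc G m c w * pdy m P w)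
      (g := fun _ => (0:ℝ)) hΩ hz (fun w hw => hPhc w hw c) b]
    exact pdy_const 0 b
  have hdsum : ∀ m : Fin n, DifferentiableAt ℝ (fun w : E n => Nc G m c w * pdy m P w) z :=
    fun m => (diffAt hΩ (sm_N hU hG m c) hz).mul (diffAt hΩ (sm_pdy hΩ hP m) hz)
  rw [pdy_sub (diffAt hΩ (sm_pdx hΩ hP c) hz)
        (diffAt hΩ (ContDiffOn.sum fun m _ => (sm_N hU hG m c).mul (sm_pdy hΩ hP m)) hz),
      pdy_sum Finset.univ _ (fun m _ => hdsum m)] at h0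
  have h1 : ∀ m : Fin n, pdy b (fun w : E n => Nc G m c w * pdy m P w) z
      = Nc G m c z * pdy m (pdy b P) z + pdy m P z * pdy b (Nc G m c) z := by
    intro m
    rw [pdy_mul (diffAt hΩ (sm_N hU hG m c) hz) (diffAt hΩ (sm_pdy hΩ hP m) hz),
      pdy_pdy_comm hΩ hP hz b m]
  rw [Finset.sum_congr rfl fun m _ => h1 m, Finset.sum_add_distrib] at h0
  have h2 : pdy b (pdx c P) z = pdx c (pdy b P) z := pdy_pdx_comm hΩ hP hz b c
  unfold delx
  have h3 : ∑ m, pdy m P z * pdy b (Nc G m c) z = ∑ m, pdy b (Nc G m c) z * pdy m P z :=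
    Finset.sum_congr rfl fun m _ => by ring
  linarith

lemma tN (hU : IsOpen U) (hG : IsSpray U G) (hP : ContDiffOn ℝ (⊤ : ℕ∞) P (Dom U))
    (hz : z ∈ Dom U) (i j : Fin n) :
    Nc (fun a w => G a w + P w * w.2 a) i j z
      = Nc G i j z + pdy j P z * z.2 i + P z * (if i = j then (1:ℝ) else 0) := by
  have hΩ := isOpen_dom hU
  have h1 : Nc (fun a w => G a w + P w * w.2 a) i j z
      = pdy j (fun w => G i w + P w * w.2 i) z := rfl
  rw [h1, pdy_add (diffAt hΩ (hG.1 i) hz)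
      ((diffAt hΩ hP hz).fun_mul (diffAt hΩ (sm_coordy i) hz)) j,
    pdy_mul (diffAt hΩ hP hz) (diffAt hΩ (sm_coordy i) hz) j, pdy_snd, Nc_def]
  ring

lemma pdy_tN (hU : IsOpen U) (hG : IsSpray U G) (hP : ContDiffOn ℝ (⊤ : ℕ∞) P (Dom U))
    (hz : z ∈ Dom U) (i j c : Fin n) :
    pdy c (Nc (fun a w => G a w + P w * w.2 a) i j) z
      = pdy c (Nc G i j) z + pdy c (pdy j P) z * z.2 i
        + pdy j P z * (if i = c then (1:ℝ) else 0)
        + pdy c P z * (if i = j then (1:ℝ) else 0) := by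
  have hΩ := isOpen_dom hU
  have dN := diffAt hΩ (sm_N hU hG i j) hz
  have dPy := diffAt hΩ (sm_pdy hΩ hP j) hz
  have dC := diffAt (Ω := Dom U) hΩ (sm_coordy i) hz
  have dP := diffAt hΩ hP hz
  have hcong := pdy_congr (f := Nc (fun a w => G a w + P w * w.2 a) i j)
      (g := fun w => Nc G i j w + pdy j P w * w.2 i + P w * (if i = j then (1:ℝ) else 0))
      hΩ hz (fun w hw => tN hU hG hP hw i j) c
  have e1 := pdy_add (f := fun w : E n => Nc G i j w + pdy j P w * w.2 i)
      (g := fun w : E n => P w * (if i = j then (1:ℝ) else 0))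
      (dN.add (dPy.mul dC)) (dP.mul_const _) c
  have e2 := pdy_add (f := Nc G i j) (g := fun w : E n => pdy j P w * w.2 i)
      dN (dPy.mul dC) c
  have e3 := pdy_mul (f := pdy j P) (g := fun w : E n => w.2 i) dPy dC c
  have e4 : pdy c (fun w : E n => P w * (if i = j then (1:ℝ) else 0)) z
      = pdy c P z * (if i = j then (1:ℝ) else 0) := by
    rw [pdy_mul dP (differentiableAt_const _) c, pdy_const]; ring
  rw [hcong, e1, e2, e3, e4, pdy_snd]
  ring

lemma pdx_tN (hU : IsOpen U) (hG : IsSpray U G) (hP : ContDiffOn ℝ (⊤ : ℕ∞) P (Dom U))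
    (hz : z ∈ Dom U) (i j c : Fin n) :
    pdx c (Nc (fun a w => G a w + P w * w.2 a) i j) z
      = pdx c (Nc G i j) z + pdx c (pdy j P) z * z.2 i
        + pdx c P z * (if i = j then (1:ℝ) else 0) := by
  have hΩ := isOpen_dom hU
  have dN := diffAt hΩ (sm_N hU hG i j) hz
  have dPy := diffAt hΩ (sm_pdy hΩ hP j) hz
  have dC := diffAt (Ω := Dom U) hΩ (sm_coordy i) hz
  have dP := diffAt hΩ hP hz
  have hcong := pdx_congr (f := Nc (fun a w => G a w + P w * w.2 a) i j)
      (g := fun w => Nc G i j w + pdy j P w * w.2 i + P w * (if i = j then (1:ℝ) else 0))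
      hΩ hz (fun w hw => tN hU hG hP hw i j) c
  have e1 := pdx_add (f := fun w : E n => Nc G i j w + pdy j P w * w.2 i)
      (g := fun w : E n => P w * (if i = j then (1:ℝ) else 0))
      (dN.add (dPy.mul dC)) (dP.mul_const _) c
  have e2 := pdx_add (f := Nc G i j) (g := fun w : E n => pdy j P w * w.2 i)
      dN (dPy.mul dC) c
  have e3 := pdx_mul (f := pdy j P) (g := fun w : E n => w.2 i) dPy dC c
  have e4 : pdx c (fun w : E n => P w * (if i = j then (1:ℝ) else 0)) z
      = pdx c P z * (if i = j then (1:ℝ) else 0) := by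
    rw [pdx_mul dP (differentiableAt_const _) c, pdx_const]; ring
  rw [hcong, e1, e2, e3, e4, pdx_snd]
  ring

lemma hC_tN (hU : IsOpen U) (hG : IsSpray U G) (hP : ContDiffOn ℝ (⊤ : ℕ∞) P (Dom U))
    (hPh : PosHomog1 U P) (hz : z ∈ Dom U) (i j : Fin n) :
    ∑ m, z.2 m * pdy m (Nc (fun a w => G a w + P w * w.2 a) i j) z
      = Nc (fun a w => G a w + P w * w.2 a) i j z := by
  have hexp : ∀ m : Fin n, z.2 m * pdy m (Nc (fun a w => G a w + P w * w.2 a) i j) z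
      = z.2 m * pdy m (Nc G i j) z + (z.2 m * pdy m (pdy j P) z) * z.2 i
        + pdy j P z * (if i = m then z.2 m else 0)
        + (z.2 m * pdy m P z) * (if i = j then (1:ℝ) else 0) := by
    intro m; rw [pdy_tN hU hG hP hz i j m]
    by_cases h : i = m <;> by_cases h' : i = j <;> simp [h, h'] <;> first | (split_ifs <;> ring) | ring
  rw [Finset.sum_congr rfl fun m _ => hexp m, Finset.sum_add_distrib, Finset.sum_add_distrib,
    Finset.sum_add_distrib, ← Finset.sum_mul, ← Finset.mul_sum, ← Finset.sum_mul,
    euler_N hU hG hz i j, euler_Py hU hG hP hPh hz j, euler_P hU hP hPh hz,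
    Finset.sum_ite_eq Finset.univ i (fun m => z.2 m), tN hU hG hP hz i j]
  simp only [Finset.mem_univ, if_true]
  ring

lemma delx_t (hU : IsOpen U) (hG : IsSpray U G) (hP : ContDiffOn ℝ (⊤ : ℕ∞) P (Dom U))
    (hz : z ∈ Dom U) (f : E n → ℝ) (c : Fin n) :
    delx (fun a w => G a w + P w * w.2 a) c f z
      = delx G c f z - pdy c P z * (∑ m, z.2 m * pdy m f z) - P z * pdy c f z := by
  unfold delx
  have h1 : ∀ m : Fin n, Nc (fun a w => G a w + P w * w.2 a) m c z * pdy m f z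
      = Nc G m c z * pdy m f z + pdy c P z * (z.2 m * pdy m f z)
        + P z * (if m = c then pdy m f z else 0) := by
    intro m
    rw [tN hU hG hP hz m c]
    by_cases h : m = c <;> simp [h] <;> ring
  rw [Finset.sum_congr rfl fun m _ => h1 m, Finset.sum_add_distrib, Finset.sum_add_distrib,
    ← Finset.mul_sum, ← Finset.mul_sum, Finset.sum_ite_eq' Finset.univ c (fun m => pdy m f z)]
  simp only [Finset.mem_univ, if_true]
  ring

lemma Sder_t (f : E n → ℝ) :
    Sder (fun a w => G a w + P w * w.2 a) f z
      = Sder G f z - 2 * P z * ∑ k, z.2 k * pdy k f z := by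
  unfold Sder
  have h1 : ∀ k : Fin n, (fun a (w : E n) => G a w + P w * w.2 a) k z * pdy k f z
      = G k z * pdy k f z + P z * (z.2 k * pdy k f z) :=
    fun k => show (G k z + P z * z.2 k) * pdy k f z = _ by ring
  rw [Finset.sum_congr rfl fun k _ => h1 k, Finset.sum_add_distrib, ← Finset.mul_sum]
  ring

lemma hA (hU : IsOpen U) (hG : IsSpray U G) (hP : ContDiffOn ℝ (⊤ : ℕ∞) P (Dom U))
    (hPhc : ∀ z ∈ Dom U, ∀ j, delx G j P z = 0) (hz : z ∈ Dom U) (i b c : Fin n) :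
    delx G c (Nc (fun a w => G a w + P w * w.2 a) i b) z
      = delx G c (Nc G i b) z + (∑ m, pdy b (Nc G m c) z * pdy m P z) * z.2 i
        - pdy b P z * Nc G i c z := by
  have hΩ := isOpen_dom hU
  have hq := hQ hU hG hP hPhc hz b c
  unfold delx at hq ⊢
  have hq2 : pdx c (pdy b P) z = ∑ m, pdy b (Nc G m c) z * pdy m P z
      + ∑ m, Nc G m c z * pdy m (pdy b P) z := by linarith
  have hphc' := hPhc z hz c
  unfold delx at hphc'
  have hphc2 : pdx c P z = ∑ m, Nc G m c z * pdy m P z := by linarith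
  rw [pdx_tN hU hG hP hz i b c]
  have h1 : ∀ m : Fin n, Nc G m c z * pdy m (Nc (fun a w => G a w + P w * w.2 a) i b) z
      = Nc G m c z * pdy m (Nc G i b) z + (Nc G m c z * pdy m (pdy b P) z) * z.2 i
        + pdy b P z * (if i = m then Nc G m c z else 0)
        + (Nc G m c z * pdy m P z) * (if i = b then (1:ℝ) else 0) := by
    intro m; rw [pdy_tN hU hG hP hz i b m]
    by_cases h : i = m <;> by_cases h' : i = b <;> simp [h, h'] <;>
      first | (split_ifs <;> ring) | ring
  rw [Finset.sum_congr rfl fun m _ => h1 m, Finset.sum_add_distrib, Finset.sum_add_distrib,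
    Finset.sum_add_distrib, ← Finset.sum_mul, ← Finset.mul_sum, ← Finset.sum_mul,
    Finset.sum_ite_eq Finset.univ i (fun m => Nc G m c z), hq2, hphc2]
  simp only [Finset.mem_univ, if_true]
  ring

lemma Rt (hU : IsOpen U) (hG : IsSpray U G) (hP : ContDiffOn ℝ (⊤ : ℕ∞) P (Dom U))
    (hPh : PosHomog1 U P) (hPhc : ∀ z ∈ Dom U, ∀ j, delx G j P z = 0)
    (hz : z ∈ Dom U) (i j k : Fin n) :
    Rcurv (fun a w => G a w + P w * w.2 a) i j k z
      = Rcurv G i j k z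
        + P z * (pdy j P z * (if i = k then (1:ℝ) else 0)
            - pdy k P z * (if i = j then (1:ℝ) else 0)) := by
  have hΩ := isOpen_dom hU
  have T : ∀ b c : Fin n,
      delx (fun a w => G a w + P w * w.2 a) c (Nc (fun a w => G a w + P w * w.2 a) i b) z
        = delx G c (Nc G i b) z + (∑ m, pdy b (Nc G m c) z * pdy m P z) * z.2 i
            - pdy b P z * Nc G i c z
          - pdy c P z * (Nc G i b z + pdy b P z * z.2 i + P z * (if i = b then (1:ℝ) else 0))
          - P z * (pdy c (Nc G i b) z + pdy c (pdy b P) z * z.2 i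
              + pdy b P z * (if i = c then (1:ℝ) else 0)
              + pdy c P z * (if i = b then (1:ℝ) else 0)) := by
    intro b c
    rw [delx_t hU hG hP hz (Nc (fun a w => G a w + P w * w.2 a) i b) c,
      hA hU hG hP hPhc hz i b c, hC_tN hU hG hP hPh hz i b, tN hU hG hP hz i b,
      pdy_tN hU hG hP hz i b c]
  have sQ : ∑ m, pdy k (Nc G m j) z * pdy m P z = ∑ m, pdy j (Nc G m k) z * pdy m P z :=
    Finset.sum_congr rfl fun m _ => by
      rw [Nc_def, Nc_def, pdy_pdy_comm hΩ (hG.1 m) hz k j]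
  have sP2 : pdy j (pdy k P) z = pdy k (pdy j P) z := pdy_pdy_comm hΩ hP hz j k
  have sN : pdy j (Nc G i k) z = pdy k (Nc G i j) z := by
    rw [Nc_def, Nc_def, pdy_pdy_comm hΩ (hG.1 i) hz j k]
  unfold Rcurv
  rw [T j k, T k j, sQ, sP2, sN]
  ring

lemma hNc : ∀ (a b : Fin n) (w : E n), Nc G a b w = pdy b (G a) w := fun _ _ _ => rfl

lemma hSP (hU : IsOpen U) (hG : IsSpray U G) (hP : ContDiffOn ℝ (⊤ : ℕ∞) P (Dom U))
    (hPhc : ∀ z ∈ Dom U, ∀ j, delx G j P z = 0) (hz : z ∈ Dom U) :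
    (∑ k, z.2 k * pdx k P z) = 2 * ∑ k, G k z * pdy k P z := by
  have h1 : ∀ k : Fin n, z.2 k * pdx k P z = ∑ m, (z.2 k * Nc G m k z) * pdy m P z := by
    intro k
    rw [hc_eq hPhc hz k, Finset.mul_sum]
    exact Finset.sum_congr rfl fun m _ => by ring
  rw [Finset.sum_congr rfl fun k _ => h1 k, Finset.sum_comm]
  have h2 : ∀ m : Fin n, ∑ k, (z.2 k * Nc G m k z) * pdy m P z = 2 * (G m z * pdy m P z) := by
    intro m
    rw [← Finset.sum_mul]
    have h3 : ∑ k, z.2 k * Nc G m k z = 2 * G m z := by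
      simp only [hNc]; exact euler_G hU hG hz m
    rw [h3]; ring
  rw [Finset.sum_congr rfl fun m _ => h2 m, ← Finset.mul_sum]

lemma hSPj (hU : IsOpen U) (hG : IsSpray U G) (hP : ContDiffOn ℝ (⊤ : ℕ∞) P (Dom U))
    (hPhc : ∀ z ∈ Dom U, ∀ j, delx G j P z = 0) (hz : z ∈ Dom U) (j : Fin n) :
    (∑ k, z.2 k * pdx k (pdy j P) z)
      = 2 * (∑ k, G k z * pdy k (pdy j P) z) + pdx j P z := by
  have hΩ := isOpen_dom hU
  have hq2 : ∀ k : Fin n, pdx k (pdy j P) z = ∑ m, pdy j (Nc G m k) z * pdy m P z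
      + ∑ m, Nc G m k z * pdy m (pdy j P) z := by
    intro k
    have hq := hQ hU hG hP hPhc hz j k
    unfold delx at hq
    linarith
  have h1 : ∀ k : Fin n, z.2 k * pdx k (pdy j P) z
      = (∑ m, (z.2 k * pdy j (Nc G m k) z) * pdy m P z)
        + ∑ m, (z.2 k * Nc G m k z) * pdy m (pdy j P) z := by
    intro k
    rw [hq2 k, mul_add, Finset.mul_sum, Finset.mul_sum]
    congr 1 <;> exact Finset.sum_congr rfl fun m _ => by ring
  rw [Finset.sum_congr rfl fun k _ => h1 k, Finset.sum_add_distrib, Finset.sum_comm,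
    Finset.sum_comm (f := fun k m => (z.2 k * Nc G m k z) * pdy m (pdy j P) z)]
  have h2 : ∀ m : Fin n, ∑ k, (z.2 k * Nc G m k z) * pdy m (pdy j P) z
      = 2 * (G m z * pdy m (pdy j P) z) := by
    intro m
    rw [← Finset.sum_mul]
    have h3 : ∑ k, z.2 k * Nc G m k z = 2 * G m z := by
      simp only [hNc]; exact euler_G hU hG hz m
    rw [h3]; ring
  have h4 : ∀ m : Fin n, ∑ k, (z.2 k * pdy j (Nc G m k) z) * pdy m P z
      = Nc G m j z * pdy m P z := by
    intro m
    rw [← Finset.sum_mul]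
    have h5 : ∑ k, z.2 k * pdy j (Nc G m k) z = Nc G m j z := by
      have h6 : ∀ k : Fin n, pdy j (Nc G m k) z = pdy k (Nc G m j) z := by
        intro k
        rw [Nc_def, Nc_def, pdy_pdy_comm hΩ (hG.1 m) hz j k]
      rw [Finset.sum_congr rfl fun k _ => by rw [h6 k]]
      exact euler_N hU hG hz m j
    rw [h5]
  rw [Finset.sum_congr rfl fun m _ => h2 m, Finset.sum_congr rfl fun m _ => h4 m,
    ← Finset.mul_sum, ← hc_eq hPhc hz j]
  ring

lemma S1 (hU : IsOpen U) (hG : IsSpray U G) (hP : ContDiffOn ℝ (⊤ : ℕ∞) P (Dom U))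
    (hPhc : ∀ z ∈ Dom U, ∀ j, delx G j P z = 0) (hz : z ∈ Dom U) (i j : Fin n) :
    Sder G (Nc (fun a w => G a w + P w * w.2 a) i j) z
      = Sder G (Nc G i j) z + pdx j P z * z.2 i - 2 * (G i z * pdy j P z) := by
  unfold Sder
  have h1 : ∀ k : Fin n, z.2 k * pdx k (Nc (fun a w => G a w + P w * w.2 a) i j) z
      = z.2 k * pdx k (Nc G i j) z + (z.2 k * pdx k (pdy j P) z) * z.2 i
        + (z.2 k * pdx k P z) * (if i = j then (1:ℝ) else 0) := by
    intro k; rw [pdx_tN hU hG hP hz i j k]; ring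
  have h2 : ∀ k : Fin n, G k z * pdy k (Nc (fun a w => G a w + P w * w.2 a) i j) z
      = G k z * pdy k (Nc G i j) z + (G k z * pdy k (pdy j P) z) * z.2 i
        + pdy j P z * (if i = k then G k z else 0)
        + (G k z * pdy k P z) * (if i = j then (1:ℝ) else 0) := by
    intro k; rw [pdy_tN hU hG hP hz i j k]
    by_cases h : i = k <;> by_cases h' : i = j <;> simp [h, h'] <;>
      first | (split_ifs <;> ring) | ring
  rw [Finset.sum_congr rfl fun k _ => h1 k, Finset.sum_congr rfl fun k _ => h2 k,
    Finset.sum_add_distrib, Finset.sum_add_distrib, Finset.sum_add_distrib,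
    Finset.sum_add_distrib, Finset.sum_add_distrib,
    ← Finset.sum_mul, ← Finset.sum_mul, ← Finset.sum_mul, ← Finset.sum_mul, ← Finset.mul_sum,
    Finset.sum_ite_eq Finset.univ i (fun k => G k z),
    hSP hU hG hP hPhc hz, hSPj hU hG hP hPhc hz j]
  simp only [Finset.mem_univ, if_true]
  ring

lemma S2 (hU : IsOpen U) (hG : IsSpray U G) (hP : ContDiffOn ℝ (⊤ : ℕ∞) P (Dom U))
    (hPh : PosHomog1 U P) (hPhc : ∀ z ∈ Dom U, ∀ j, delx G j P z = 0)
    (hz : z ∈ Dom U) (i j : Fin n) :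
    ∑ k, Nc (fun a w => G a w + P w * w.2 a) i k z
        * Nc (fun a w => G a w + P w * w.2 a) k j z
      = (∑ k, Nc G i k z * Nc G k j z) + pdy j P z * (2 * G i z)
        + 2 * (P z * Nc G i j z) + pdx j P z * z.2 i
        + 3 * (P z * (pdy j P z * z.2 i))
        + P z ^ 2 * (if i = j then (1:ℝ) else 0) := by
  have h1 : ∀ k : Fin n, Nc (fun a w => G a w + P w * w.2 a) i k z
        * Nc (fun a w => G a w + P w * w.2 a) k j z
      = Nc G i k z * Nc G k j z
        + pdy j P z * (z.2 k * Nc G i k z)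
        + P z * (if k = j then Nc G i k z else 0)
        + (Nc G k j z * pdy k P z) * z.2 i
        + pdy j P z * ((z.2 k * pdy k P z) * z.2 i)
        + P z * (if k = j then pdy k P z * z.2 i else 0)
        + P z * (if i = k then Nc G k j z else 0)
        + P z * (if i = k then pdy j P z * z.2 k else 0)
        + P z ^ 2 * (if i = k then (if k = j then (1:ℝ) else 0) else 0) := by
    intro k; rw [tN hU hG hP hz i k, tN hU hG hP hz k j]
    by_cases hik : i = k <;> by_cases hkj : k = j <;> simp [hik, hkj] <;>
      first | (split_ifs <;> ring) | ring
  have eg : ∑ k, z.2 k * Nc G i k z = 2 * G i z := by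
    simp only [hNc]; exact euler_G hU hG hz i
  have epp : ∑ k, z.2 k * pdy k P z = P z := euler_P hU hP hPh hz
  have hcq : pdx j P z = ∑ k, Nc G k j z * pdy k P z := hc_eq hPhc hz j
  rw [Finset.sum_congr rfl fun k _ => h1 k]
  simp only [Finset.sum_add_distrib, ← Finset.mul_sum, ← Finset.sum_mul,
    Finset.sum_ite_eq, Finset.sum_ite_eq', Finset.mem_univ, if_true]
  rw [eg, epp, ← hcq]
  ring

lemma A1b (hU : IsOpen U) (hG : IsSpray U G) (hP : ContDiffOn ℝ (⊤ : ℕ∞) P (Dom U))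
    (hPh : PosHomog1 U P) (hz : z ∈ Dom U) (i : Fin n) :
    ∑ m, z.2 m * pdy m (fun w => G i w + P w * w.2 i) z
      = 2 * G i z + 2 * (P z * z.2 i) := by
  have h1 : ∀ m : Fin n, z.2 m * pdy m (fun w => G i w + P w * w.2 i) z
      = z.2 m * pdy m (G i) z + (z.2 m * pdy m P z) * z.2 i
        + P z * (if i = m then z.2 m else 0) := by
    intro m
    have e : pdy m (fun w => G i w + P w * w.2 i) z
        = Nc (fun a w => G a w + P w * w.2 a) i m z := rfl
    rw [e, tN hU hG hP hz i m, hNc i m]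
    by_cases h : i = m <;> simp [h] <;> first | (split_ifs <;> ring) | ring
  rw [Finset.sum_congr rfl fun m _ => h1 m, Finset.sum_add_distrib, Finset.sum_add_distrib,
    ← Finset.sum_mul, ← Finset.mul_sum, Finset.sum_ite_eq Finset.univ i (fun m => z.2 m),
    euler_G hU hG hz i, euler_P hU hP hPh hz]
  simp only [Finset.mem_univ, if_true]
  ring

lemma A1c (hU : IsOpen U) (hG : IsSpray U G) (hP : ContDiffOn ℝ (⊤ : ℕ∞) P (Dom U))
    (hPhc : ∀ z ∈ Dom U, ∀ j, delx G j P z = 0) (hz : z ∈ Dom U) (i j : Fin n) :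
    delx G j (fun w => G i w + P w * w.2 i) z = delx G j (G i) z - P z * Nc G i j z := by
  have hΩ := isOpen_dom hU
  have dGi := diffAt hΩ (hG.1 i) hz
  have dP := diffAt hΩ hP hz
  have dC := diffAt (Ω := Dom U) hΩ (sm_coordy i) hz
  unfold delx
  have e1 := pdx_add (f := G i) (g := fun w : E n => P w * w.2 i) dGi (dP.mul dC) j
  have e2 := pdx_mul (f := P) (g := fun w : E n => w.2 i) dP dC j
  rw [e1, e2, pdx_snd]
  have h1 : ∀ m : Fin n, Nc G m j z * pdy m (fun w => G i w + P w * w.2 i) z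
      = Nc G m j z * pdy m (G i) z + (Nc G m j z * pdy m P z) * z.2 i
        + P z * (if i = m then Nc G m j z else 0) := by
    intro m
    have e : pdy m (fun w => G i w + P w * w.2 i) z
        = Nc (fun a w => G a w + P w * w.2 a) i m z := rfl
    rw [e, tN hU hG hP hz i m, hNc i m]
    by_cases h : i = m <;> simp [h] <;> first | (split_ifs <;> ring) | ring
  rw [Finset.sum_congr rfl fun m _ => h1 m, Finset.sum_add_distrib, Finset.sum_add_distrib,
    ← Finset.sum_mul, ← Finset.mul_sum, Finset.sum_ite_eq Finset.univ i (fun m => Nc G m j z)]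
  have hphc' := hPhc z hz j
  unfold delx at hphc'
  have hphc2 : pdx j P z = ∑ m, Nc G m j z * pdy m P z := by linarith
  rw [hphc2]
  simp only [Finset.mem_univ, if_true, hNc]
  ring

lemma RJt (hU : IsOpen U) (hG : IsSpray U G) (hP : ContDiffOn ℝ (⊤ : ℕ∞) P (Dom U))
    (hPh : PosHomog1 U P) (hPhc : ∀ z ∈ Dom U, ∀ j, delx G j P z = 0)
    (hz : z ∈ Dom U) (i j : Fin n) :
    RJac (fun a w => G a w + P w * w.2 a) i j z
      = RJac G i j z + P z ^ 2 * (if i = j then (1:ℝ) else 0)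
        - P z * pdy j P z * z.2 i := by
  unfold RJac
  rw [delx_t hU hG hP hz (fun w => G i w + P w * w.2 i) j,
    A1b hU hG hP hPh hz i, A1c hU hG hP hPhc hz i j]
  have e : pdy j (fun w => G i w + P w * w.2 i) z
      = Nc (fun a w => G a w + P w * w.2 a) i j z := rfl
  rw [e, Sder_t (Nc (fun a w => G a w + P w * w.2 a) i j),
    hC_tN hU hG hP hPh hz i j, S1 hU hG hP hPhc hz i j,
    S2 hU hG hP hPh hPhc hz i j, tN hU hG hP hz i j]
  ring

end Main

/-- Projective change `G̃ⁱ = Gⁱ + P yⁱ` by a horizontally constant, positively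
1-homogeneous factor `P`: formulas for the new nonlinear connection,
curvature tensor and Jacobi endomorphism. -/
theorem projective_change_formulas {n : ℕ}
    (U : Set (Fin n → ℝ)) (hU : IsOpen U)
    (G : Fin n → E n → ℝ) (hG : IsSpray U G)
    (P : E n → ℝ) (hP : ContDiffOn ℝ (⊤ : ℕ∞) P (Dom U))
    (hPh : PosHomog1 U P)
    (hPhc : ∀ z ∈ Dom U, ∀ j, delx G j P z = 0) :
    IsSpray U (fun i z => G i z + P z * z.2 i) ∧
    ∀ z ∈ Dom U,
      (∀ i j, Nc (fun i z => G i z + P z * z.2 i) i j z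
        = Nc G i j z + pdy j P z * z.2 i + P z * (if i = j then (1:ℝ) else 0)) ∧
      (∀ i j k, Rcurv (fun i z => G i z + P z * z.2 i) i j k z
        = Rcurv G i j k z
          + P z * (pdy j P z * (if i = k then (1:ℝ) else 0)
              - pdy k P z * (if i = j then (1:ℝ) else 0))) ∧
      (∀ i j, RJac (fun i z => G i z + P z * z.2 i) i j z
        = RJac G i j z + P z ^ 2 * (if i = j then (1:ℝ) else 0)
            - P z * pdy j P z * z.2 i)    := by
  have hspray : IsSpray U (fun i z => G i z + P z * z.2 i) := by
    constructor
    · intro i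
      exact (hG.1 i).add (hP.mul (sm_coordy i))
    · intro i x hx y hy L hL
      show G i (x, L • y) + P (x, L • y) * (L • y) i
          = L ^ 2 * (G i (x, y) + P (x, y) * y i)
      rw [hG.2 i x hx y hy L hL, hPh x hx y hy L hL]
      have hL' : (L • y) i = L * y i := rfl
      rw [hL']; ring
  refine ⟨hspray, fun z hz => ⟨?_, ?_, ?_⟩⟩
  · intro i j; exact tN hU hG hP hz i j
  · intro i j k; exact Rt hU hG hP hPh hPhc hz i j k
  · intro i j; exact RJt hU hG hP hPh hPhc hz i j


end PM
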